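/- For an invertible operator D and bounded operator a, the recursion [D,a]^{(k+1)} D^{-2k-3} = D^2 ([D,a]^{(k)} D^{-2k-1}) D^{-2} - [D,a]^{(k)} D^{-2k-1} implies by induction that [D,a]^{(k)} D^{-2k-1} = Σ_{j=0}^{k} (-1)^j C(k,j) (α^{2(k-j)+1}(a) - α^{2(k-j)}(a)) for all k ≥ 0. -/

import Mathlib

/-- Integer powers of an invertible bounded operator. -/
def zpD {H : Type*} [NormedAddCommGroup H] [InnerProductSpace ℂ H] [CompleteSpace H]
    (D : (H →L[ℂ] H)ˣ) (n : ℤ) : H →L[ℂ] H :=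
  ((D ^ n : (H →L[ℂ] H)ˣ) : H →L[ℂ] H)

/-- `∇(T) = [D², T]`. -/
def nablaD {H : Type*} [NormedAddCommGroup H] [InnerProductSpace ℂ H] [CompleteSpace H]
    (D : (H →L[ℂ] H)ˣ) (T : H →L[ℂ] H) : H →L[ℂ] H :=
  zpD D 2 * T - T * zpD D 2

/-- `α^m(a) = D^m a D^{-m}`. -/
def alphaD {H : Type*} [NormedAddCommGroup H] [InnerProductSpace ℂ H] [CompleteSpace H]
    (D : (H →L[ℂ] H)ˣ) (m : ℤ) (a : H →L[ℂ] H) : H →L[ℂ] H :=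
  zpD D m * a * zpD D (-m)

/-! With `X k = [D,a]^{(k)} D^{-2k-1}`, the recursion reads `X (k + 1) = α²(X k) - X k`, and
`X 0 = α(a) - a`. Since `α²` shifts `f r = α^{2r+1}(a) - α^{2r}(a)` to `f (r + 1)`, induction
shows that `X k` is the `k`-th forward difference of `f` at `0`, whose binomial expansion is the
claimed sum. -/

section FwdDiff

variable {M G : Type*} [AddCommMonoid M] [AddCommGroup G]

lemma AddMonoidHom.map_fwdDiff_iter {G' : Type*} [AddCommGroup G'] (φ : G →+ G') (h : M)
    (f : M → G) (n : ℕ) (y : M) : φ ((fwdDiff h)^[n] f y) = (fwdDiff h)^[n] (φ ∘ f) y := by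
  simp only [fwdDiff_iter_eq_sum_shift, map_sum, map_zsmul, Function.comp_apply]

lemma eq_fwdDiff_iter_of_succ_eq_sub (φ : G →+ G) (h y : M) (f : M → G)
    (hf : ∀ r, φ (f r) = f (r + h)) (X : ℕ → G) (h0 : X 0 = f y)
    (hX : ∀ k, X (k + 1) = φ (X k) - X k) (k : ℕ) : X k = (fwdDiff h)^[k] f y := by
  induction k with
  | zero => exact h0
  | succ k ih =>
    have hφf : φ ∘ f = fun r ↦ f (r + h) := funext hf
    rw [hX, ih, φ.map_fwdDiff_iter, hφf, fwdDiff_iter_comp_add, Function.iterate_succ_apply']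
    rfl

lemma fwdDiff_iter_one_eq_sum (f : ℤ → G) (n : ℕ) (y : ℤ) :
    (fwdDiff 1)^[n] f y =
      ∑ j ∈ Finset.range (n + 1), ((-1 : ℤ) ^ j * (n.choose j : ℤ)) • f (y + (n - j)) := by
  rw [fwdDiff_iter_eq_sum_shift, ← Finset.sum_range_reflect]
  refine Finset.sum_congr rfl fun j hj ↦ ?_
  have hjn : j ≤ n := Nat.lt_succ_iff.mp (Finset.mem_range.mp hj)
  rw [Nat.add_sub_cancel, Nat.sub_sub_self hjn, Nat.choose_symm hjn, nsmul_one, Nat.cast_sub hjn]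

end FwdDiff

section Operators

variable {H : Type*} [NormedAddCommGroup H] [InnerProductSpace ℂ H] [CompleteSpace H]
  (D : (H →L[ℂ] H)ˣ)

lemma zpD_mul_zpD (m n : ℤ) : zpD D m * zpD D n = zpD D (m + n) := by
  simp [zpD, zpow_add]

lemma zpD_zero : zpD D 0 = 1 := by simp [zpD]

lemma zpD_one : zpD D 1 = D := by simp [zpD]

lemma nablaD_mul_zpD (T : H →L[ℂ] H) (n : ℤ) :
    nablaD D T * zpD D n = zpD D 2 * (T * zpD D (n + 2)) * zpD D (-2) - T * zpD D (n + 2) := by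
  simp only [nablaD, sub_mul, mul_assoc, zpD_mul_zpD]
  ring_nf

def alphaDAddHom (m : ℤ) : (H →L[ℂ] H) →+ (H →L[ℂ] H) :=
  (AddMonoidHom.mulRight (zpD D (-m))).comp (AddMonoidHom.mulLeft (zpD D m))

lemma alphaDAddHom_apply (m : ℤ) (T : H →L[ℂ] H) : alphaDAddHom D m T = alphaD D m T := rfl

lemma alphaD_alphaD (m n : ℤ) (a : H →L[ℂ] H) :
    alphaD D m (alphaD D n a) = alphaD D (m + n) a := by
  simp only [alphaD, mul_assoc, zpD_mul_zpD]
  rw [← mul_assoc, zpD_mul_zpD, neg_add_rev]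

lemma commutator_mul_zpD_neg_one (a : H →L[ℂ] H) :
    ((D : H →L[ℂ] H) * a - a * D) * zpD D (-1) = alphaD D 1 a - alphaD D 0 a := by
  simp only [alphaD, ← zpD_one, sub_mul, mul_assoc, zpD_mul_zpD]
  simp [zpD_zero]

end Operators

/-- the recursion
`[D,a]^{(k+1)} D^{-2k-3} = D² ([D,a]^{(k)} D^{-2k-1}) D^{-2} - [D,a]^{(k)} D^{-2k-1}`
holds, and implies by induction that
`[D,a]^{(k)} D^{-2k-1} = Σ_{j=0}^{k} (-1)^j C(k,j) (α^{2(k-j)+1}(a) - α^{2(k-j)}(a))`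
for all `k ≥ 0`, where `[D,a]^{(k)} = ∇^k(Da - aD)` and `α^m(a) = D^m a D^{-m}`. -/
theorem stmt7 {H : Type*} [NormedAddCommGroup H] [InnerProductSpace ℂ H] [CompleteSpace H]
    (D : (H →L[ℂ] H)ˣ) (a : H →L[ℂ] H) :
    (∀ k : ℕ,
      (nablaD D)^[k + 1] ((D : H →L[ℂ] H) * a - a * (D : H →L[ℂ] H)) *
          zpD D (-(2 * (k : ℤ)) - 3) =
        zpD D 2 *
            ((nablaD D)^[k] ((D : H →L[ℂ] H) * a - a * (D : H →L[ℂ] H)) *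
              zpD D (-(2 * (k : ℤ)) - 1)) * zpD D (-2) -
          (nablaD D)^[k] ((D : H →L[ℂ] H) * a - a * (D : H →L[ℂ] H)) *
            zpD D (-(2 * (k : ℤ)) - 1)) ∧
    (∀ k : ℕ,
      (nablaD D)^[k] ((D : H →L[ℂ] H) * a - a * (D : H →L[ℂ] H)) *
          zpD D (-(2 * (k : ℤ)) - 1) =
        ∑ j ∈ Finset.range (k + 1),
          ((-1 : ℤ) ^ j * (k.choose j : ℤ)) •
            (alphaD D (2 * ((k : ℤ) - j) + 1) a - alphaD D (2 * ((k : ℤ) - j)) a)) := by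
  have hrec (k : ℕ) := by
    have := nablaD_mul_zpD D ((nablaD D)^[k] ((D : H →L[ℂ] H) * a - a * D)) (-(2 * (k : ℤ)) - 3)
    rwa [← Function.iterate_succ_apply' (nablaD D),
      show -(2 * (k : ℤ)) - 3 + 2 = -(2 * k) - 1 by ring] at this
  refine ⟨hrec, fun k ↦ ?_⟩
  set f : ℤ → H →L[ℂ] H := fun r ↦ alphaD D (2 * r + 1) a - alphaD D (2 * r) a
  have hshift (r : ℤ) : alphaDAddHom D 2 (f r) = f (r + 1) := by
    simp only [f, map_sub, alphaDAddHom_apply, alphaD_alphaD]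
    ring_nf
  calc _ = (fwdDiff 1)^[k] f 0 := by
        refine eq_fwdDiff_iter_of_succ_eq_sub (alphaDAddHom D 2) 1 0 f hshift
          (fun i ↦ (nablaD D)^[i] ((D : H →L[ℂ] H) * a - a * D) * zpD D (-(2 * (i : ℤ)) - 1))
          ?_ (fun i ↦ ?_) k
        · simpa [f] using commutator_mul_zpD_neg_one D a
        · push_cast
          rw [show -(2 * ((i : ℤ) + 1)) - 1 = -(2 * i) - 3 by ring, hrec i]
          rfl
    _ = _ := by simp only [fwdDiff_iter_one_eq_sum, zero_add, f]
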